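/- arXiv:math/0702452 — 2 statements merged into one kernel-verified Lean document; each statement's English description precedes it below -/
import Mathlib

section
/- Define the polynomial D_{r,n}(t) = Σ_{k=0}^{n} d(r,n,k) t^k, where d(r,n,k) counts π ∈ G_{r,n} with exc_A(π) = k. Then for n ≥ 1, D_{r,n}(t) = (rn + (n−1)(t−1))·D_{r,n−1}(t) − (t−1)(t+r−1)·D'_{r,n−1}(t). -/
open Finset Polynomial

/-- The group of colored permutations `G_{r,n} = Z_r ≀ S_n`, realized as bijections of the
colored alphabet `Σ = [n] × {0,…,r-1}` commuting with the color shift. -/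
def ColoredPerm (r n : ℕ) [NeZero r] : Type :=
  {π : Equiv.Perm (Fin n × Fin r) //
    ∀ x : Fin n × Fin r, π (x.1, x.2 + 1) = ((π x).1, (π x).2 + 1)}

/-- The color order on the colored alphabet:
`1^[r-1] < ⋯ < n^[r-1] < ⋯ < 1^[0] < ⋯ < n^[0]` (higher color is smaller). -/
def colorLt {r n : ℕ} (x y : Fin n × Fin r) : Prop :=
  y.2 < x.2 ∨ (x.2 = y.2 ∧ x.1 < y.1)

/-- The excedance number `exc` of a colored permutation. -/
noncomputable def cExc {r n : ℕ} [NeZero r] (π : ColoredPerm r n) : ℕ :=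
  Nat.card {x : Fin n × Fin r // colorLt x (π.1 x)}

/-- `exc_A(π) = |{i ∈ [n-1] : π(i) > i}|` (positions are the color-0 letters,
and `i ∈ [n-1]` corresponds to `i.val + 1 < n`). -/
noncomputable def cExcA {r n : ℕ} [NeZero r] (π : ColoredPerm r n) : ℕ :=
  Nat.card {i : Fin n // i.val + 1 < n ∧ colorLt (i, 0) (π.1 (i, 0))}

/-- `csum(π)`: the sum of the colors appearing in the window notation of `π`. -/
def csum {r n : ℕ} [NeZero r] (π : ColoredPerm r n) : ℕ :=
  ∑ i : Fin n, (π.1 (i, 0)).2.val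

/-- `d(r,n,k)`: the number of colored permutations `π ∈ G_{r,n}` with `exc_A(π) = k`. -/
noncomputable def dG (r n : ℕ) [NeZero r] (k : ℕ) : ℕ :=
  Nat.card {π : ColoredPerm r n // cExcA π = k}

/-- The generating polynomial `D_{r,n}(t) = Σ_{k=0}^{n} d(r,n,k) t^k` of `exc_A` over `G_{r,n}`. -/
noncomputable def Dpoly (r n : ℕ) [NeZero r] : Polynomial ℚ :=
  ∑ k ∈ Finset.range (n + 1), Polynomial.C ((dG r n k : ℚ)) * Polynomial.X ^ k

/-!
A colored permutation is a permutation `σ ∈ S_n` together with a coloring `c : [n] → ℤ_r`,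
and `i` counts in `exc_A` exactly when it is an excedance of `σ` of color `0` (an excedance is
never at `i = n`). Summing over the colorings, an excedance contributes `t + r - 1` and any other
position `r`, so `D_{r,n}(t) = ∑_{σ ∈ S_n} (t + r - 1)^{exc σ} r^{n - exc σ}`. Every `σ ∈ S_n` is
obtained from a unique `e ∈ S_{n-1}` by inserting a new smallest letter; `exc e + 1` of the `n`
insertions keep the number of excedances and the other `n - 1 - exc e` raise it by one. The
recursion then holds term by term.
-/
namespace Equiv.Perm

variable {α : Type*} [Fintype α] [LinearOrder α]

def exc (σ : Perm α) : ℕ := #{i | i < σ i}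

theorem exc_le_card (σ : Perm α) : σ.exc ≤ Fintype.card α :=
  card_filter_le _ _

theorem card_filter_symm_lt (σ : Perm α) : #{i | σ.symm i < i} = σ.exc :=
  card_equiv σ.symm (by simp)

theorem exc_decomposeFin_symm_zero {m : ℕ} (e : Perm (Fin m)) :
    (decomposeFin.symm (0, e)).exc = e.exc := by
  simp [exc, Fin.card_filter_univ_succ]

/-- `decomposeFin.symm (q + 1, e)` maps `0 ↦ q + 1` and `e⁻¹ q + 1 ↦ 0`: it gains the excedance
at `0` and loses the one at `e⁻¹ q`, if there is one. -/
theorem exc_decomposeFin_symm_succ {m : ℕ} (e : Perm (Fin m)) (q : Fin m) :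
    (decomposeFin.symm (q.succ, e)).exc = if e.symm q < q then e.exc else e.exc + 1 := by
  have hsucc (x : Fin m) :
      x.succ < decomposeFin.symm (q.succ, e) x.succ ↔ e x ≠ q ∧ x < e x := by
    rw [decomposeFin_symm_apply_succ]
    rcases eq_or_ne (e x) q with h | h
    · simp [h]
    · rw [swap_apply_of_ne_of_ne (Fin.succ_ne_zero _) (by simpa using h)]
      simp [h]
  have hrest : #{x | e x ≠ q ∧ x < e x} = #(({i | e.symm i < i} : Finset (Fin m)).erase q) := by
    rw [← filter_erase]
    exact card_equiv e (by simp)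
  have hpos : e.symm q < q → 0 < e.exc := fun h =>
    e.card_filter_symm_lt ▸ card_pos.2 ⟨q, by simpa using h⟩
  rw [exc, Fin.card_filter_univ_succ]
  simp only [decomposeFin_symm_apply_zero, Fin.succ_pos,
    if_true, hsucc, hrest, card_erase_eq_ite, mem_filter, mem_univ, true_and,
    card_filter_symm_lt]
  split_ifs with h
  · have := hpos h
    omega
  · rfl

theorem sum_perm_fin_succ_exc {M : Type*} [AddCommMonoid M] (m : ℕ) (F : ℕ → M) :
    ∑ σ : Perm (Fin (m + 1)), F σ.exc =
      ∑ e : Perm (Fin m), ((e.exc + 1) • F e.exc + (m - e.exc) • F (e.exc + 1)) := by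
  rw [← decomposeFin.symm.sum_comp, Fintype.sum_prod_type, sum_comm]
  refine sum_congr rfl fun e _ => ?_
  have hcompl : #{q | ¬e.symm q < q} = m - e.exc := by
    rw [filter_not, card_sdiff_of_subset (filter_subset _ _), card_univ, Fintype.card_fin,
      card_filter_symm_lt]
  simp only [Fin.sum_univ_succ, exc_decomposeFin_symm_zero, exc_decomposeFin_symm_succ,
    apply_ite F, sum_ite, sum_const, card_filter_symm_lt, hcompl]
  rw [add_nsmul, one_nsmul]
  abel

end Equiv.Perm

instance (r n : ℕ) [NeZero r] : Fintype (ColoredPerm r n) := by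
  unfold ColoredPerm
  infer_instance

namespace ColoredPerm

variable {r n : ℕ} [NeZero r]

def ofPermColoring (p : Equiv.Perm (Fin n) × (Fin n → Fin r)) : ColoredPerm r n :=
  ⟨{ toFun := fun x => (p.1 x.1, p.2 x.1 + x.2)
     invFun := fun y => (p.1.symm y.1, y.2 - p.2 (p.1.symm y.1))
     left_inv := fun x => by simp
     right_inv := fun y => by simp },
   fun x => by simp [add_assoc]⟩

open Fin.NatCast in
theorem apply_eq (π : ColoredPerm r n) (i : Fin n) (j : Fin r) :
    π.1 (i, j) = ((π.1 (i, 0)).1, (π.1 (i, 0)).2 + j) := by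
  have hcast (k : ℕ) : π.1 (i, k) = ((π.1 (i, 0)).1, (π.1 (i, 0)).2 + k) := by
    induction k with
    | zero => simp
    | succ k ih => simpa [ih, add_assoc] using π.2 (i, k)
  simpa using hcast j

theorem ofPermColoring_bijective :
    Function.Bijective (ofPermColoring : Equiv.Perm (Fin n) × (Fin n → Fin r) → _) := by
  refine ⟨fun p p' h => ?_, fun π => ?_⟩
  · have happ (i : Fin n) : (p.1 i, p.2 i) = (p'.1 i, p'.2 i) := by
      simpa [ofPermColoring] using congrArg (fun π : ColoredPerm r n => π.1 (i, 0)) h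
    exact Prod.ext (Equiv.ext fun i => congrArg Prod.fst (happ i))
      (funext fun i => congrArg Prod.snd (happ i))
  · let f : Fin n → Fin n := fun i => (π.1 (i, 0)).1
    have hf : Function.Injective f := by
      intro i i' hii'
      have : π.1 (i', (π.1 (i, 0)).2 - (π.1 (i', 0)).2) = π.1 (i, 0) := by
        rw [apply_eq]
        exact Prod.ext hii'.symm (by simp)
      exact (congrArg Prod.fst (π.1.injective this)).symm
    refine ⟨(Equiv.ofBijective f hf.bijective_of_finite, fun i => (π.1 (i, 0)).2), ?_⟩
    exact Subtype.ext <| Equiv.ext fun ⟨i, j⟩ => (apply_eq π i j).symm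

theorem cExcA_ofPermColoring (p : Equiv.Perm (Fin n) × (Fin n → Fin r)) :
    cExcA (ofPermColoring p) = #{i | i < p.1 i ∧ p.2 i = 0} := by
  have hiff (i : Fin n) :
      (i.val + 1 < n ∧ colorLt (i, 0) ((ofPermColoring p).1 (i, 0))) ↔ (i < p.1 i ∧ p.2 i = 0) := by
    simp only [ofPermColoring, colorLt, add_zero, Equiv.coe_fn_mk, Fin.not_lt_zero, false_or]
    constructor
    · exact fun ⟨_, h0, hlt⟩ => ⟨hlt, h0.symm⟩
    · exact fun ⟨hlt, h0⟩ => ⟨by have := (p.1 i).isLt; omega, h0.symm, hlt⟩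
  rw [cExcA, Nat.card_congr (Equiv.subtypeEquivRight hiff), Nat.card_eq_fintype_card,
    Fintype.card_subtype]

end ColoredPerm

noncomputable def excWeight (r n k : ℕ) : ℚ[X] :=
  ((X : ℚ[X]) + r - 1) ^ k * r ^ (n - k)

theorem Dpoly_eq_sum_pow_cExcA (r n : ℕ) [NeZero r] :
    Dpoly r n = ∑ π : ColoredPerm r n, X ^ cExcA π := by
  have hle (π : ColoredPerm r n) : cExcA π ≤ n :=
    (Finite.card_subtype_le _).trans_eq (Nat.card_fin n)
  rw [Dpoly, ← sum_fiberwise_of_maps_to (g := cExcA) (t := range (n + 1))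
    fun π _ => mem_range.2 (Nat.lt_succ_of_le (hle π))]
  refine sum_congr rfl fun k _ => ?_
  rw [sum_congr rfl fun π hπ => by rw [(mem_filter.1 hπ).2], sum_const, nsmul_eq_mul, dG,
    Nat.card_eq_fintype_card, Fintype.card_subtype, C_eq_natCast]

theorem sum_fin_ite_eq_zero {R : Type*} [CommRing R] (r : ℕ) [NeZero r] (a : R) :
    ∑ v : Fin r, (if v = 0 then a else 1) = a + r - 1 := by
  rw [Fintype.sum_eq_add_sum_compl 0, if_pos rfl,
    sum_congr rfl fun v hv => if_neg (mem_compl.1 hv ∘ mem_singleton.2), sum_const,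
    card_compl, card_singleton, Fintype.card_fin, nsmul_one, Nat.cast_sub NeZero.one_le]
  ring

theorem Dpoly_eq_sum_excWeight (r n : ℕ) [NeZero r] :
    Dpoly r n = ∑ σ : Equiv.Perm (Fin n), excWeight r n σ.exc := by
  rw [Dpoly_eq_sum_pow_cExcA,
    ← Fintype.sum_bijective _ ColoredPerm.ofPermColoring_bijective _ _ fun _ => rfl,
    Fintype.sum_prod_type]
  refine sum_congr rfl fun σ _ => ?_
  have hcolor (i : Fin n) : ∑ v : Fin r, (if i < σ i ∧ v = 0 then X else 1) =
      if i < σ i then X + (r : ℚ[X]) - 1 else (r : ℚ[X]) := by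
    split_ifs with h
    · simpa only [h, true_and] using sum_fin_ite_eq_zero r (X : ℚ[X])
    · simp [h]
  have hnot : #{i | ¬i < σ i} = n - σ.exc := by
    rw [filter_not, card_sdiff_of_subset (filter_subset _ _), card_univ, Fintype.card_fin,
      Equiv.Perm.exc]
  simp only [ColoredPerm.cExcA_ofPermColoring, ← prod_const, prod_filter]
  rw [← Fintype.prod_sum fun i v => if i < σ i ∧ v = 0 then (X : ℚ[X]) else 1,
    prod_congr rfl fun i _ => hcolor i, prod_ite, prod_const, prod_const, hnot, excWeight,
    Equiv.Perm.exc]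

theorem excWeight_succ (r : ℕ) {m k : ℕ} (hk : k ≤ m) :
    (k + 1) • excWeight r (m + 1) k + (m - k) • excWeight r (m + 1) (k + 1) =
      (C ((r * (m + 1) : ℕ) : ℚ) + C (m : ℚ) * (X - 1)) * excWeight r m k -
        (X - 1) * (X + C (r : ℚ) - 1) * derivative (excWeight r m k) := by
  obtain ⟨d, rfl⟩ := Nat.exists_eq_add_of_le hk
  have hderiv : (X + C (r : ℚ) - 1) * derivative (excWeight r (k + d) k) =
      (k : ℚ[X]) * excWeight r (k + d) k := by
    rw [excWeight, Nat.add_sub_cancel_left]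
    cases k with
    | zero => simp
    | succ k =>
      simp only [derivative_mul, derivative_pow, derivative_sub, derivative_add, derivative_X,
        derivative_natCast, derivative_one, map_natCast]
      push_cast
      ring
  rw [mul_assoc, hderiv]
  simp only [excWeight, nsmul_eq_mul, map_natCast, Nat.add_sub_cancel_left]
  rw [show k + d + 1 - k = d + 1 by omega, show k + d + 1 - (k + 1) = d by omega]
  push_cast
  ring

/-- For `n ≥ 1`,
`D_{r,n}(t) = (rn + (n−1)(t−1))·D_{r,n−1}(t) − (t−1)(t+r−1)·D'_{r,n−1}(t)`. -/
theorem Dpoly_recursion (r n : ℕ) [NeZero r] (hn : 1 ≤ n) :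
    Dpoly r n =
      (Polynomial.C ((r * n : ℕ) : ℚ) +
          Polynomial.C (((n - 1 : ℕ) : ℚ)) * (Polynomial.X - 1)) * Dpoly r (n - 1) -
        (Polynomial.X - 1) * (Polynomial.X + Polynomial.C (r : ℚ) - 1) *
          Polynomial.derivative (Dpoly r (n - 1)) := by
  obtain ⟨m, rfl⟩ := Nat.exists_eq_add_of_le' hn
  rw [Nat.add_sub_cancel, Dpoly_eq_sum_excWeight, Dpoly_eq_sum_excWeight,
    Equiv.Perm.sum_perm_fin_succ_exc, derivative_sum, mul_sum, mul_sum, ← sum_sub_distrib]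
  exact sum_congr rfl fun σ _ =>
    excWeight_succ r (σ.exc_le_card.trans_eq (Fintype.card_fin m))
end

section
/- The sequence D_{n,k} = |{π ∈ B_n : exc_A(π) = k}| satisfies the recursion D_{n,k} = (n−k)·D_{n−1,k−1} + (n+1)·D_{n−1,k} + (k+1)·D_{n−1,k+1}. -/
open Finset Polynomial

/-- `D_{n,k}`: the number of signed permutations `π ∈ B_n` with `exc_A(π) = k`.
The index `k` ranges over `ℤ`, so counts vanish for negative `k`. -/
noncomputable def DB (n : ℕ) (k : ℤ) : ℕ :=
  Nat.card {π : ColoredPerm 2 n // (cExcA π : ℤ) = k}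

/-!
In window notation a signed permutation is a permutation `σ` of `[n]` together with a colour
for each position, and `exc_A` counts the positions `j` of colour `0` with `j < σ j`.
Every signed permutation of `[m + 1]` arises exactly once from a signed permutation of `[m]`,
a value `p` for position `0` and a colour `ε` for it (`Equiv.Perm.decomposeFin`, `Fin.cons`).
Position `0` is an excedance iff `p ≠ 0` and `ε = 0`; when `p = σ y + 1`, position `y + 1`
takes the value `0` and so loses the excedance `y` may have had, while every other position
keeps its status. Sorting the `2 (m + 1)` choices by their effect on `exc_A` yields the
three coefficients of the recursion.
-/

open Equiv

namespace ColoredPerm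

variable {r n : ℕ} [NeZero r]

open Fin.NatCast in
lemma apply_add_snd (π : ColoredPerm r n) (x : Fin n × Fin r) (c : Fin r) :
    π.1 (x.1, x.2 + c) = ((π.1 x).1, (π.1 x).2 + c) := by
  suffices h : ∀ k : ℕ, π.1 (x.1, x.2 + (k : Fin r)) = ((π.1 x).1, (π.1 x).2 + (k : Fin r)) by
    simpa using h c.val
  intro k
  induction k with
  | zero => simp
  | succ k ih =>
    push_cast
    simp only [← add_assoc, π.2 (x.1, x.2 + (k : Fin r)), ih]

lemma injective_fst_apply_zero (π : ColoredPerm r n) :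
    Function.Injective fun i : Fin n => (π.1 (i, 0)).1 := by
  intro a b hab
  have h := π.apply_add_snd (a, 0) ((π.1 (b, 0)).2 - (π.1 (a, 0)).2)
  simp only [zero_add, add_sub_cancel] at h
  rw [show (π.1 (a, 0)).1 = (π.1 (b, 0)).1 from hab] at h
  exact congrArg Prod.fst (π.1.injective h)

noncomputable def equivPermProd : ColoredPerm r n ≃ Perm (Fin n) × (Fin n → Fin r) where
  toFun π := (ofBijective _ π.injective_fst_apply_zero.bijective_of_finite,
    fun i => (π.1 (i, 0)).2)
  invFun σ := ⟨prodShear σ.1 fun i => Equiv.addLeft (σ.2 i),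
    fun x => by simp [prodShear, add_assoc]⟩
  left_inv π := by
    refine Subtype.ext <| ext fun ⟨i, c⟩ => ?_
    have h := π.apply_add_snd (i, 0) c
    rw [zero_add] at h
    simp only [prodShear_apply, ofBijective_apply, Equiv.coe_addLeft, h]
  right_inv σ := by
    ext <;> simp [prodShear]

lemma equivPermProd_fst_apply (π : ColoredPerm r n) (i : Fin n) :
    (equivPermProd π).1 i = (π.1 (i, 0)).1 :=
  rfl

lemma equivPermProd_snd_apply (π : ColoredPerm r n) (i : Fin n) :
    (equivPermProd π).2 i = (π.1 (i, 0)).2 :=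
  rfl

end ColoredPerm

def excA {r n : ℕ} [NeZero r] (σ : Perm (Fin n) × (Fin n → Fin r)) : ℕ :=
  #{j | σ.2 j = 0 ∧ j < σ.1 j}

lemma cExcA_eq_excA {r n : ℕ} [NeZero r] (π : ColoredPerm r n) :
    cExcA π = excA (ColoredPerm.equivPermProd π) := by
  classical
  rw [cExcA, Nat.card_eq_fintype_card, Fintype.card_subtype, excA]
  congr 1
  ext i
  have := (π.1 (i, 0)).1.isLt
  simp only [mem_filter, mem_univ, true_and, colorLt, false_or,
    ColoredPerm.equivPermProd_fst_apply, ColoredPerm.equivPermProd_snd_apply,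
    eq_comm (a := (0 : Fin r)), Fin.lt_def, Fin.val_zero, Nat.not_lt_zero]
  omega

lemma DB_eq_sum (n : ℕ) (k : ℤ) :
    (DB n k : ℤ) = ∑ σ : Perm (Fin n) × (Fin n → Fin 2), if (excA σ : ℤ) = k then 1 else 0 := by
  rw [sum_boole, DB, ← Fintype.card_subtype, ← Nat.card_eq_fintype_card,
    Nat.card_congr (ColoredPerm.equivPermProd.subtypeEquiv (q := fun σ => (excA σ : ℤ) = k)
      fun π => by rw [cExcA_eq_excA])]

def insertEquiv (r m : ℕ) :
    (Perm (Fin m) × (Fin m → Fin r)) × (Fin (m + 1) × Fin r) ≃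
      Perm (Fin (m + 1)) × (Fin (m + 1) → Fin r) :=
  (prodProdProdComm _ _ _ _).trans <|
    prodCongr ((prodComm _ _).trans Perm.decomposeFin.symm)
      ((prodComm _ _).trans (Fin.consEquiv fun _ => Fin r))

section Insertion

variable {r m : ℕ}

lemma insertEquiv_apply (σ : Perm (Fin m) × (Fin m → Fin r)) (p : Fin (m + 1)) (ε : Fin r) :
    insertEquiv r m (σ, (p, ε)) = (Perm.decomposeFin.symm (p, σ.1), Fin.cons ε σ.2) :=
  rfl

variable [NeZero r]

lemma excA_insertEquiv_zero (σ : Perm (Fin m) × (Fin m → Fin r)) (ε : Fin r) :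
    excA (insertEquiv r m (σ, (0, ε))) = excA σ := by
  rw [insertEquiv_apply, excA, excA, Fin.card_filter_univ_succ']
  simp [Perm.decomposeFin_symm_apply_succ]

lemma excA_insertEquiv_succ (σ : Perm (Fin m) × (Fin m → Fin r)) (y : Fin m) (ε : Fin r) :
    excA (insertEquiv r m (σ, ((σ.1 y).succ, ε))) + (if σ.2 y = 0 ∧ y < σ.1 y then 1 else 0) =
      excA σ + if ε = 0 then 1 else 0 := by
  rw [insertEquiv_apply, excA, excA, Fin.card_filter_univ_succ']
  set s : Finset (Fin m) := {x | σ.2 x = 0 ∧ x < σ.1 x}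
  have hfilter : ({x | σ.2 x = 0 ∧ x.succ < swap 0 (σ.1 y).succ (σ.1 x).succ} : Finset _) =
      s.erase y := by
    ext x
    rcases eq_or_ne x y with rfl | hxy
    · simp
    · have hne : (σ.1 x).succ ≠ (σ.1 y).succ := (Fin.succ_injective _).ne (σ.1.injective.ne hxy)
      simp only [s, mem_filter, mem_erase, mem_univ, true_and, ne_eq, hxy, not_false_eq_true,
        swap_apply_of_ne_of_ne (Fin.succ_ne_zero _) hne, Fin.succ_lt_succ_iff]
  have hcard : #(s.erase y) + (if σ.2 y = 0 ∧ y < σ.1 y then 1 else 0) = #s := by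
    split_ifs with hy
    · exact card_erase_add_one (by simpa [s] using hy)
    · rw [erase_eq_of_notMem (by simpa [s] using hy), add_zero]
  simp only [Fin.cons_zero, Fin.cons_succ, Perm.decomposeFin_symm_apply_zero,
    Perm.decomposeFin_symm_apply_succ, hfilter, Fin.succ_pos, and_true]
  omega

lemma sum_ite_excA_insertEquiv_eq (σ : Perm (Fin m) × (Fin m → Fin 2)) (k : ℤ) :
    ∑ x : Fin (m + 1) × Fin 2, (if (excA (insertEquiv 2 m (σ, x)) : ℤ) = k then 1 else 0 : ℤ) =
      ((m : ℤ) + 2) * (if (excA σ : ℤ) = k then 1 else 0) +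
        ((m : ℤ) + 1 - k) * (if (excA σ : ℤ) = k - 1 then 1 else 0) +
          (k + 1) * (if (excA σ : ℤ) = k + 1 then 1 else 0) := by
  have hsucc : ∀ y, ∑ ε : Fin 2,
      (if (excA (insertEquiv 2 m (σ, ((σ.1 y).succ, ε))) : ℤ) = k then 1 else 0 : ℤ) =
        if σ.2 y = 0 ∧ y < σ.1 y then
          (if (excA σ : ℤ) = k then 1 else 0) + (if (excA σ : ℤ) = k + 1 then 1 else 0)
        else (if (excA σ : ℤ) = k - 1 then 1 else 0) + (if (excA σ : ℤ) = k then 1 else 0) := by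
    intro y
    have h0 := excA_insertEquiv_succ σ y 0
    have h1 := excA_insertEquiv_succ σ y 1
    rw [Fin.sum_univ_two]
    split_ifs at h0 h1 ⊢ <;> omega
  have hcard : excA σ + #{y | ¬(σ.2 y = 0 ∧ y < σ.1 y)} = m := by
    rw [excA, card_filter_add_card_filter_not, card_univ, Fintype.card_fin]
  rw [Fintype.sum_prod_type, Fin.sum_univ_succ, ← sum_comp σ.1]
  simp only [excA_insertEquiv_zero, hsucc, sum_const, card_univ, Fintype.card_fin]
  rw [sum_ite, sum_const, sum_const, ← excA]
  simp only [nsmul_eq_mul]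
  split_ifs <;> push_cast <;> linarith

end Insertion

/-- The recursion `D_{n,k} = (n−k)·D_{n−1,k−1} + (n+1)·D_{n−1,k} + (k+1)·D_{n−1,k+1}`. -/
theorem DB_recursion (n : ℕ) (hn : 1 ≤ n) (k : ℤ) :
    (DB n k : ℤ) =
      ((n : ℤ) - k) * DB (n - 1) (k - 1) + ((n : ℤ) + 1) * DB (n - 1) k +
        (k + 1) * DB (n - 1) (k + 1) := by
  obtain ⟨m, rfl⟩ := Nat.exists_eq_add_of_le' hn
  rw [add_tsub_cancel_right, DB_eq_sum, ← (insertEquiv 2 m).sum_comp, Fintype.sum_prod_type]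
  simp only [sum_ite_excA_insertEquiv_eq, sum_add_distrib, ← mul_sum, ← DB_eq_sum]
  push_cast
  ring
end
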